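/- arXiv:1709.03389 — 2 statements merged into one kernel-verified Lean document; each statement's English description precedes it below -/
import Mathlib

section
/- Let W(x,y) = x^n + Σ_{i=d}^n A_i x^{n−i} y^i be a homogeneous polynomial with complex coefficients, 1 ≤ d ≤ n and A_d ≠ 0, and let q be a real number with q > 0 and q ≠ 1. Then there exists a unique polynomial P(T) ∈ ℂ[T] of degree at most n − d such that the coefficient of T^{n−d} in the formal power series expansion (in T, with coefficients in ℂ[x,y]) of (P(T)/((1−T)(1−qT)))·(y(1−T)+xT)^n equals (W(x,y) − x^n)/(q−1). -/
/- Zeta polynomials for invariant polynomials (Duursma / Chinen).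
`Cxy` is the polynomial ring ℂ[x,y] (with x = X 0, y = X 1).
The power series `polyToSeries P * geomQ q * bodySeries n` is the expansion of
`(P(T)/((1-T)(1-qT))) * (y(1-T)+xT)^n`, using
`1/((1-T)(1-qT)) = ∑_{m≥0} (∑_{j=0}^m q^j) T^m`. -/

noncomputable section

abbrev Cxy : Type := MvPolynomial (Fin 2) ℂ

/-- The formal power series expansion of `1/((1-T)(1-qT))`. -/
def geomQ (q : ℝ) : PowerSeries Cxy :=
  PowerSeries.mk fun m => algebraMap ℂ Cxy (∑ j ∈ Finset.range (m + 1), (q : ℂ) ^ j)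

/-- A polynomial `P(T) ∈ ℂ[T]` viewed as a power series with coefficients in ℂ[x,y]. -/
def polyToSeries (P : Polynomial ℂ) : PowerSeries Cxy :=
  PowerSeries.mk fun m => algebraMap ℂ Cxy (P.coeff m)

/-- The power series `(y(1-T) + xT)^n`. -/
def bodySeries (n : ℕ) : PowerSeries Cxy :=
  (PowerSeries.C (R := Cxy) (MvPolynomial.X 1) * (1 - PowerSeries.X)
    + PowerSeries.C (R := Cxy) (MvPolynomial.X 0) * PowerSeries.X) ^ n

/-- `P` is a zeta polynomial for `W` (of shape `x^n + ∑_{i=d}^n A_i x^{n-i} y^i`):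
it has degree at most `n - d` and the coefficient of `T^{n-d}` in
`(P(T)/((1-T)(1-qT)))(y(1-T)+xT)^n` equals `(W - x^n)/(q-1)`. -/
def IsZetaPoly (q : ℝ) (n d : ℕ) (W : Cxy) (P : Polynomial ℂ) : Prop :=
  P.degree ≤ (n - d : ℕ) ∧
  PowerSeries.coeff (R := Cxy) (n - d) (polyToSeries P * geomQ q * bodySeries n)
    = MvPolynomial.C (((q : ℂ) - 1)⁻¹) * (W - MvPolynomial.X 0 ^ n)

/-
Since `y(1-T) + xT = y + (x-y)T`, the coefficient of `T^k` in `(y(1-T)+xT)^n` is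
`C(n,k) y^(n-k) (x-y)^k`, and these forms are linearly independent: the substitution `x ↦ x + y`
turns them into distinct monomials. The form `(W - x^n)/(q-1)` is divisible by `y^d`, hence a
combination of those with `k ≤ n - d`. Comparing coordinates, the zeta condition prescribes exactly
the coefficients of `T^0, …, T^(n-d)` in `F = P(T)/((1-T)(1-qT))`; since `(1-T)(1-qT)` is a unit
of `ℂ⟦T⟧`, this determines `P` of degree `≤ n - d` as a truncation of `F · (1-T)(1-qT)`.
-/

namespace ZetaPoly

open Finset

section DiffMonomial

open MvPolynomial

variable {R : Type*} [CommRing R]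

def diffMonomial (n k : ℕ) : MvPolynomial (Fin 2) R :=
  X 1 ^ (n - k) * (X 0 - X 1) ^ k

theorem aeval_diffMonomial (n k : ℕ) :
    aeval ![(X 0 + X 1 : MvPolynomial (Fin 2) R), X 1] (diffMonomial (R := R) n k)
      = monomial (Finsupp.single 0 k + Finsupp.single 1 (n - k)) 1 := by
  rw [← mul_one (1 : R), ← monomial_mul, ← X_pow_eq_monomial, ← X_pow_eq_monomial, mul_comm]
  simp [diffMonomial]

theorem linearIndependent_diffMonomial (n : ℕ) :
    LinearIndependent R (diffMonomial (R := R) n) := by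
  have hinj : Function.Injective
      fun k : ℕ => Finsupp.single (0 : Fin 2) k + Finsupp.single 1 (n - k) :=
    fun k l h => by simpa using DFunLike.congr_fun h 0
  refine LinearIndependent.of_comp
    (aeval ![(X 0 + X 1 : MvPolynomial (Fin 2) R), X 1]).toLinearMap ?_
  have hcomp : (aeval ![(X 0 + X 1 : MvPolynomial (Fin 2) R), X 1]).toLinearMap ∘ diffMonomial n
      = basisMonomials (Fin 2) R ∘ fun k => Finsupp.single 0 k + Finsupp.single 1 (n - k) :=
    funext (aeval_diffMonomial n)
  rw [hcomp]
  exact (basisMonomials (Fin 2) R).linearIndependent.comp _ hinj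

theorem X_pow_mul_X_pow_eq_sum_diffMonomial {j m : ℕ} (i : ℕ) (hj : j ≤ m) :
    (X 0 ^ j * X 1 ^ i : MvPolynomial (Fin 2) R)
      = ∑ c ∈ range (m + 1), (j.choose c : R) • diffMonomial (j + i) c := by
  have hX : (X 0 : MvPolynomial (Fin 2) R) = (X 0 - X 1) + X 1 := by ring
  rw [hX, add_pow, sum_mul]
  refine (sum_congr rfl fun c hc => ?_).trans
    (sum_subset (range_subset_range.mpr (by omega)) fun c _ hc => ?_)
  · have hc : c ≤ j := Nat.lt_succ_iff.mp (mem_range.mp hc)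
    rw [diffMonomial, smul_eq_C_mul, map_natCast, show j + i - c = (j - c) + i by omega, pow_add]
    ring
  · rw [mem_range, not_lt] at hc
    rw [Nat.choose_eq_zero_of_lt (by omega), Nat.cast_zero, zero_smul]

theorem sum_C_mul_X_pow_mul_X_pow_eq_sum_diffMonomial (A : ℕ → R) (d n : ℕ) :
    ∑ i ∈ Icc d n, C (A i) * X 0 ^ (n - i) * X 1 ^ i
      = ∑ k ∈ range (n - d + 1), (∑ i ∈ Icc d n, A i * (n - i).choose k) • diffMonomial n k := by
  simp_rw [sum_smul, mul_smul]
  rw [sum_comm]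
  refine sum_congr rfl fun i hi => ?_
  obtain ⟨hdi, hin⟩ := mem_Icc.mp hi
  rw [mul_assoc, X_pow_mul_X_pow_eq_sum_diffMonomial i (show n - i ≤ n - d by omega),
    Nat.sub_add_cancel hin, mul_sum]
  simp_rw [smul_eq_C_mul]

end DiffMonomial

open PowerSeries in
open scoped Polynomial in
theorem existsUnique_degree_le_coeff_mul_eq {R : Type*} [CommRing R] {G : R⟦X⟧} (hG : IsUnit G)
    (F : R⟦X⟧) (m : ℕ) :
    ∃! P : R[X], P.degree ≤ m ∧ ∀ j ≤ m, coeff j ((P : R⟦X⟧) * G) = coeff j F := by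
  obtain ⟨H, hGH⟩ := hG.exists_right_inv
  have hsol : ∀ P : R[X], P.degree ≤ m →
      ((∀ j ≤ m, coeff j ((P : R⟦X⟧) * G) = coeff j F) ↔ P = trunc (m + 1) (F * H)) := by
    intro P hP
    have hPtrunc : trunc (m + 1) (P : R⟦X⟧) = P :=
      trunc_coe_eq_self (Nat.lt_succ_of_le (Polynomial.natDegree_le_of_degree_le hP))
    have hcoeff : (∀ j ≤ m, coeff j ((P : R⟦X⟧) * G) = coeff j F) ↔
        trunc (m + 1) ((P : R⟦X⟧) * G) = trunc (m + 1) F := by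
      simp only [Polynomial.ext_iff, coeff_trunc, Nat.lt_succ_iff]
      exact forall_congr' fun j => by by_cases hj : j ≤ m <;> simp [hj]
    rw [hcoeff]
    constructor
    · intro h
      calc P = trunc (m + 1) ((P : R⟦X⟧) * G * H) := by rw [mul_assoc, hGH, mul_one, hPtrunc]
        _ = trunc (m + 1) (F * H) := by rw [← trunc_trunc_mul, h, trunc_trunc_mul]
    · rintro rfl
      rw [trunc_trunc_mul, mul_assoc, mul_comm H, hGH, mul_one]
  have hdeg : (trunc (m + 1) (F * H)).degree ≤ m :=
    Polynomial.degree_le_of_natDegree_le (Nat.lt_succ_iff.mp (natDegree_trunc_lt _ m))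
  exact ⟨_, ⟨hdeg, (hsol _ hdeg).2 rfl⟩, fun P hP => (hsol P hP.1).1 hP.2⟩

section ZetaSeries

open MvPolynomial

def geomSeries (q : ℝ) : PowerSeries ℂ :=
  PowerSeries.mk fun m => ∑ j ∈ range (m + 1), (q : ℂ) ^ j

theorem isUnit_geomSeries (q : ℝ) : IsUnit (geomSeries q) :=
  PowerSeries.isUnit_iff_constantCoeff.mpr (by simp [geomSeries])

theorem polyToSeries_mul_geomQ (P : Polynomial ℂ) (q : ℝ) :
    polyToSeries P * geomQ q = PowerSeries.map (algebraMap ℂ Cxy) (P * geomSeries q) := by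
  rw [map_mul]
  rfl

theorem bodySeries_eq_sum (n : ℕ) :
    bodySeries n = ∑ k ∈ range (n + 1),
      PowerSeries.C ((n.choose k : ℂ) • diffMonomial n k) * PowerSeries.X ^ k := by
  have hlin : PowerSeries.C (X 1) * (1 - PowerSeries.X) + PowerSeries.C (X 0) * PowerSeries.X
      = PowerSeries.C (X 0 - X 1 : Cxy) * PowerSeries.X + PowerSeries.C (X 1) := by
    rw [map_sub]; ring
  rw [bodySeries, hlin, add_pow]
  refine sum_congr rfl fun k _ => ?_
  simp only [diffMonomial, smul_eq_C_mul, map_natCast, map_mul, map_pow, mul_pow]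
  ring

theorem coeff_bodySeries (n k : ℕ) :
    PowerSeries.coeff k (bodySeries n) = (n.choose k : ℂ) • diffMonomial n k := by
  rw [bodySeries_eq_sum, map_sum]
  simp_rw [PowerSeries.coeff_C_mul_X_pow]
  rw [sum_ite_eq]
  split_ifs with hk
  · rfl
  · rw [mem_range, not_lt] at hk
    rw [Nat.choose_eq_zero_of_lt (by omega), Nat.cast_zero, zero_smul]

theorem coeff_map_mul_bodySeries (F : PowerSeries ℂ) (n m : ℕ) :
    PowerSeries.coeff m (PowerSeries.map (algebraMap ℂ Cxy) F * bodySeries n)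
      = ∑ k ∈ range (m + 1),
          (PowerSeries.coeff (m - k) F * n.choose k) • diffMonomial n k := by
  rw [mul_comm, PowerSeries.coeff_mul, Nat.sum_antidiagonal_eq_sum_range_succ_mk]
  refine sum_congr rfl fun k _ => ?_
  rw [coeff_bodySeries, PowerSeries.coeff_map, mul_comm, ← Algebra.smul_def, smul_smul]

def rhsCoeff (q : ℝ) (A : ℕ → ℂ) (n d k : ℕ) : ℂ :=
  ((q : ℂ) - 1)⁻¹ * ∑ i ∈ Icc d n, A i * (n - i).choose k

def targetSeries (q : ℝ) (A : ℕ → ℂ) (n d : ℕ) : PowerSeries ℂ :=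
  PowerSeries.mk fun j => rhsCoeff q A n d (n - d - j) / n.choose (n - d - j)

variable {q : ℝ} {A : ℕ → ℂ} {n d : ℕ} {W : Cxy}

theorem C_mul_sub_X_pow_eq_sum_rhsCoeff
    (hW : W = X 0 ^ n + ∑ i ∈ Icc d n, C (A i) * X 0 ^ (n - i) * X 1 ^ i) :
    C (((q : ℂ) - 1)⁻¹) * (W - X 0 ^ n)
      = ∑ k ∈ range (n - d + 1), rhsCoeff q A n d k • diffMonomial n k := by
  rw [hW, add_sub_cancel_left, sum_C_mul_X_pow_mul_X_pow_eq_sum_diffMonomial, mul_sum]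
  simp_rw [rhsCoeff, mul_smul, smul_eq_C_mul]

theorem isZetaPoly_iff (hdn : d ≤ n)
    (hW : W = X 0 ^ n + ∑ i ∈ Icc d n, C (A i) * X 0 ^ (n - i) * X 1 ^ i) (P : Polynomial ℂ) :
    IsZetaPoly q n d W P ↔ P.degree ≤ (n - d : ℕ) ∧ ∀ j ≤ n - d,
      PowerSeries.coeff j ((P : PowerSeries ℂ) * geomSeries q)
        = PowerSeries.coeff j (targetSeries q A n d) := by
  set m := n - d
  have hchoose : ∀ k ≤ m, (n.choose k : ℂ) ≠ 0 := fun k hk =>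
    Nat.cast_ne_zero.mpr (Nat.choose_pos (by omega)).ne'
  rw [IsZetaPoly, polyToSeries_mul_geomQ, coeff_map_mul_bodySeries,
    C_mul_sub_X_pow_eq_sum_rhsCoeff hW]
  refine and_congr_right fun _ => ⟨fun h j hj => ?_, fun h => sum_congr rfl fun k hk => ?_⟩
  · have hcoeff := linearIndependent_iff'ₛ.mp (linearIndependent_diffMonomial n) _ _ _ h (m - j)
      (mem_range.mpr (by omega))
    rw [Nat.sub_sub_self hj] at hcoeff
    rw [targetSeries, PowerSeries.coeff_mk, eq_div_iff (hchoose _ (Nat.sub_le m j)), hcoeff]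
  · have hk : k ≤ m := Nat.lt_succ_iff.mp (mem_range.mp hk)
    rw [h (m - k) (Nat.sub_le m k), targetSeries, PowerSeries.coeff_mk, Nat.sub_sub_self hk,
      div_mul_cancel₀ _ (hchoose k hk)]

end ZetaSeries

end ZetaPoly

theorem exists_unique_zeta_poly_general (n d : ℕ) (hdn : d ≤ n)
    (q : ℝ) (A : ℕ → ℂ) (W : Cxy)
    (hW : W = MvPolynomial.X 0 ^ n +
      ∑ i ∈ Finset.Icc d n, MvPolynomial.C (A i) * MvPolynomial.X 0 ^ (n - i) *
        MvPolynomial.X 1 ^ i) :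
    ∃! P : Polynomial ℂ, IsZetaPoly q n d W P :=
  (existsUnique_congr (ZetaPoly.isZetaPoly_iff hdn hW)).mpr
    (ZetaPoly.existsUnique_degree_le_coeff_mul_eq (ZetaPoly.isUnit_geomSeries q) _ _)

/-- existence and uniqueness of the zeta polynomial. -/
theorem exists_unique_zeta_poly (n d : ℕ) (hd1 : 1 ≤ d) (hdn : d ≤ n)
    (q : ℝ) (hq0 : 0 < q) (hq1 : q ≠ 1) (A : ℕ → ℂ) (hAd : A d ≠ 0) (W : Cxy)
    (hW : W = MvPolynomial.X 0 ^ n +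
      ∑ i ∈ Finset.Icc d n, MvPolynomial.C (A i) * MvPolynomial.X 0 ^ (n - i) *
        MvPolynomial.X 1 ^ i) :
    ∃! P : Polynomial ℂ, IsZetaPoly q n d W P :=
  exists_unique_zeta_poly_general n d hdn q A W hW

end
end

section
/- Let q = 6 + 2√5, σ = (1/√q)·[[1, q−1],[1, −1]], τ = [[1, 0],[0, −1]], and let G = ⟨σ, τ⟩ ⊆ GL₂(ℝ) (a group of order 10). Then for every complex number λ such that det(I − λA) ≠ 0 for all A ∈ G and λ² ≠ 1 and λ⁵ ≠ 1, one has (1/10)·Σ_{A∈G} 1/det(I − λA) = 1/((1 − λ²)(1 − λ⁵)). (That is, the Molien series of G equals 1/((1−λ²)(1−λ⁵)).) -/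
/-!
The matrices `σ` and `τ` are reflections (involutions of determinant `-1`), and their product
`ρ = στ` has determinant `1` and trace `t = (√5 - 1)/2`, a root of `t² + t = 1`. By
Cayley–Hamilton this forces `ρ⁵ = 1` and `tr ρᵏ = 2, t, -1-t, -1-t, t` for `k = 0, …, 4`, so `G`
is the dihedral group of order `10`. For `A ∈ GL₂` one has
`det(I - λA) = 1 - (tr A) λ + (det A) λ²`, which is `1 - λ²` on the five reflections. On the
rotations, the two quadratics with middle coefficients `-t` and `1 + t` multiply to the cyclotomic
polynomial `1 + λ + λ² + λ³ + λ⁴`, and the Molien sum collapses to `1/((1 - λ²)(1 - λ⁵))`.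
-/

noncomputable section

def qval : ℝ := 6 + 2 * Real.sqrt 5

def sigmaMat : Matrix (Fin 2) (Fin 2) ℝ :=
  (Real.sqrt qval)⁻¹ • !![1, qval - 1; 1, -1]

def tauMat : Matrix (Fin 2) (Fin 2) ℝ := !![1, 0; 0, -1]

/-- `det(I - λA)`, viewing the real matrix `A` as a complex matrix. -/
def molienDet (lam : ℂ) (A : GL (Fin 2) ℝ) : ℂ :=
  Matrix.det (1 - lam • ((A : Matrix (Fin 2) (Fin 2) ℝ).map (Complex.ofReal)))

section PowVal

variable {n : ℕ} [NeZero n] {G : Type*} [Group G]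

lemma pow_zmod_val_add {b : G} (hb : b ^ n = 1) (i j : ZMod n) :
    b ^ (i + j).val = b ^ i.val * b ^ j.val := by
  rw [ZMod.val_add, ← pow_eq_pow_mod _ hb, pow_add]

lemma pow_zmod_val_sub {b : G} (hb : b ^ n = 1) (i j : ZMod n) :
    b ^ (j - i).val = (b ^ i.val)⁻¹ * b ^ j.val := by
  rw [eq_inv_mul_iff_mul_eq, ← pow_zmod_val_add hb, add_sub_cancel]

end PowVal

lemma mul_pow_mul_of_mul_self {G : Type*} [Group G] {a c : G} (ha : a * a = 1) (hc : c * c = 1)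
    (k : ℕ) : a * (a * c) ^ k * a = ((a * c) ^ k)⁻¹ := by
  have ha' : a⁻¹ = a := inv_eq_of_mul_eq_one_right ha
  have hc' : c⁻¹ = c := inv_eq_of_mul_eq_one_right hc
  calc a * (a * c) ^ k * a = (a * (a * c) * a⁻¹) ^ k := by rw [conj_pow, ha']
    _ = ((a * c) ^ k)⁻¹ := by rw [← inv_pow, mul_inv_rev, ha', hc', ← mul_assoc, ha, one_mul]

namespace DihedralGroup

variable {n : ℕ} [NeZero n] {G : Type*} [Group G]

def lift (a c : G) (ha : a * a = 1) (hc : c * c = 1) (hn : (a * c) ^ n = 1) :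
    DihedralGroup n →* G where
  toFun
    | r i => (a * c) ^ i.val
    | sr i => a * (a * c) ^ i.val
  map_one' := by simp only [one_def, ZMod.val_zero, pow_zero]
  map_mul' := by
    have swap (i : ZMod n) : (a * c) ^ i.val * a = a * ((a * c) ^ i.val)⁻¹ := by
      rw [← mul_pow_mul_of_mul_self ha hc, ← mul_assoc, ← mul_assoc, ha, one_mul]
    rintro (i | i) (j | j)
    · simp only [r_mul_r, pow_zmod_val_add hn]
    · simp only [r_mul_sr, pow_zmod_val_sub hn, ← mul_assoc, swap]
    · simp only [sr_mul_r, pow_zmod_val_add hn, mul_assoc]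
    · simp only [sr_mul_sr, pow_zmod_val_sub hn]
      rw [mul_assoc, ← mul_assoc _ a, swap, ← mul_assoc, ← mul_assoc, ha, one_mul]

variable {a c : G} (ha : a * a = 1) (hc : c * c = 1) (hn : (a * c) ^ n = 1)

@[simp]
lemma lift_r (i : ZMod n) : lift a c ha hc hn (r i) = (a * c) ^ i.val := rfl

@[simp]
lemma lift_sr (i : ZMod n) : lift a c ha hc hn (sr i) = a * (a * c) ^ i.val := rfl

lemma range_lift : (lift a c ha hc hn).range = Subgroup.closure {a, c} := by
  have ha_mem : a ∈ Subgroup.closure {a, c} := Subgroup.subset_closure (by simp)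
  have hc_mem : c ∈ Subgroup.closure {a, c} := Subgroup.subset_closure (by simp)
  apply le_antisymm
  · rintro x ⟨i | i, rfl⟩
    · exact pow_mem (mul_mem ha_mem hc_mem) _
    · exact mul_mem ha_mem (pow_mem (mul_mem ha_mem hc_mem) _)
  · rw [Subgroup.closure_le, Set.insert_subset_iff, Set.singleton_subset_iff]
    refine ⟨⟨sr 0, by simp⟩, ⟨sr 0 * r 1, ?_⟩⟩
    rw [map_mul, lift_sr, lift_r, ZMod.val_one_eq_one_mod, ← pow_eq_pow_mod _ hn, ZMod.val_zero,
      pow_zero, mul_one, pow_one, ← mul_assoc, ha, one_mul]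

lemma lift_injective (hord : orderOf (a * c) = n) (h2 : 2 < n) :
    Function.Injective (lift a c ha hc hn) := by
  rw [injective_iff_map_eq_one]
  rintro (i | i) h
  · rw [lift_r] at h
    have hdvd := orderOf_dvd_of_pow_eq_one h
    rw [hord] at hdvd
    rw [(ZMod.val_eq_zero i).mp (Nat.eq_zero_of_dvd_of_lt hdvd (ZMod.val_lt i)), r_zero]
  · -- `a` would be a power of `a * c`, hence commute with it; but conjugation by `a` inverts
    -- `a * c`, so `(a * c) ^ 2 = 1`.
    have ha' : a = ((a * c) ^ i.val)⁻¹ := eq_inv_of_mul_eq_one_left h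
    have hcomm : Commute ((a * c) ^ i.val)⁻¹ (a * c) := ((Commute.refl _).pow_left _).inv_left
    rw [← ha'] at hcomm
    have hinv := mul_pow_mul_of_mul_self ha hc 1
    rw [pow_one, hcomm.eq, mul_assoc, ha, mul_one] at hinv
    have hdvd := orderOf_dvd_of_pow_eq_one (sq (a * c) ▸ mul_eq_one_iff_eq_inv.mpr hinv)
    rw [hord] at hdvd
    exact absurd (Nat.le_of_dvd two_pos hdvd) h2.not_ge

lemma sum_univ {M : Type*} [AddCommMonoid M] (f : DihedralGroup n → M) :
    ∑ x, f x = ∑ i, f (r i) + ∑ i, f (sr i) := by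
  rw [← equivSum.symm.sum_comp, Fintype.sum_sum_type]
  rfl

end DihedralGroup

lemma MonoidHom.finsum_mem_range {G H M : Type*} [Group G] [Fintype G] [Group H] [AddCommMonoid M]
    (φ : G →* H) (hφ : Function.Injective φ) (f : H → M) :
    ∑ᶠ x ∈ φ.range, f x = ∑ g, f (φ g) := by
  rw [← finsum_eq_sum_of_fintype]
  exact _root_.finsum_mem_range (f := f) hφ

namespace Matrix

variable {R : Type*} [CommRing R] (M : Matrix (Fin 2) (Fin 2) R)

lemma det_one_sub_smul_fin_two (x : R) : (1 - x • M).det = 1 - M.trace * x + M.det * x ^ 2 := by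
  simp only [det_fin_two, trace_fin_two, sub_apply, smul_apply, one_apply_eq, smul_eq_mul,
    one_apply_ne (by decide : (0 : Fin 2) ≠ 1), one_apply_ne (by decide : (1 : Fin 2) ≠ 0)]
  ring

lemma mul_self_fin_two : M * M = M.trace • M - M.det • 1 := by
  ext i j
  fin_cases i <;> fin_cases j <;> simp [mul_apply, trace_fin_two, det_fin_two] <;> ring

lemma trace_pow_add_two (k : ℕ) :
    (M ^ (k + 2)).trace = M.trace * (M ^ (k + 1)).trace - M.det * (M ^ k).trace := by
  rw [pow_add, sq, mul_self_fin_two, mul_sub, mul_smul_comm, mul_smul_comm, mul_one, ← pow_succ,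
    trace_sub, trace_smul, trace_smul, smul_eq_mul, smul_eq_mul]

lemma trace_eq_zero_of_mul_self_eq_one (hM : M * M = 1) (hdet : M.det = -1) : M.trace = 0 := by
  have hsmul : M.trace • M = 0 := by
    have := M.mul_self_fin_two
    rwa [hM, hdet, neg_smul, one_smul, sub_neg_eq_add, right_eq_add] at this
  have := congrArg (· * M) hsmul
  simp only [smul_mul_assoc, hM, zero_mul] at this
  simpa using congrFun (congrFun this 0) 0

open Polynomial in
lemma pow_five_eq_one_of_trace_sq_add_trace_eq_one (hdet : M.det = 1)
    (htr : M.trace ^ 2 + M.trace = 1) : M ^ 5 = 1 := by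
  have hquad : aeval M (X ^ 2 - C M.trace * X + 1) = 0 := by
    simp only [map_add, map_sub, map_mul, aeval_X, aeval_C, map_one,
      Algebra.algebraMap_eq_smul_one, smul_mul_assoc, one_mul, sq, mul_self_fin_two, hdet, one_smul]
    abel
  -- Since `t ^ 2 + t = 1`, `X ^ 2 - t X + 1` divides the fifth cyclotomic polynomial.
  have hfactor : (X ^ 5 - 1 : R[X]) =
      (X ^ 2 - C M.trace * X + 1) * ((X - 1) * (X ^ 2 + C (1 + M.trace) * X + 1)) := by
    have hC := congrArg C htr
    simp only [map_add, map_pow, map_one] at hC ⊢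
    linear_combination (X ^ 3 - X ^ 2) * hC
  have := congrArg (aeval M) hfactor
  rwa [map_mul, hquad, zero_mul, map_sub, map_pow, aeval_X, map_one, sub_eq_zero] at this

lemma trace_pow_of_trace_sq_add_trace_eq_one (hdet : M.det = 1)
    (htr : M.trace ^ 2 + M.trace = 1) :
    (M ^ 2).trace = -1 - M.trace ∧ (M ^ 3).trace = -1 - M.trace ∧ (M ^ 4).trace = M.trace := by
  have h2 : (M ^ 2).trace = M.trace * (M ^ 1).trace - M.det * (M ^ 0).trace :=
    M.trace_pow_add_two 0
  have h3 : (M ^ 3).trace = M.trace * (M ^ 2).trace - M.det * (M ^ 1).trace :=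
    M.trace_pow_add_two 1
  have h4 : (M ^ 4).trace = M.trace * (M ^ 3).trace - M.det * (M ^ 2).trace :=
    M.trace_pow_add_two 2
  rw [pow_zero, pow_one, trace_one, Fintype.card_fin, Nat.cast_ofNat, hdet] at h2
  rw [pow_one, hdet] at h3
  rw [hdet] at h4
  have t2 : (M ^ 2).trace = -1 - M.trace := by linear_combination h2 + htr
  have t3 : (M ^ 3).trace = -1 - M.trace := by linear_combination h3 + M.trace * t2 - htr
  exact ⟨t2, t3, by linear_combination h4 + M.trace * t3 - t2 - htr⟩

end Matrix

lemma molien_sum_eq_of_sq_add_self_eq_one {K : Type*} [Field K] [CharZero K] {t x : K}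
    (ht : t ^ 2 + t = 1)
    (h1 : 1 - t * x + x ^ 2 ≠ 0) (h2 : 1 + (1 + t) * x + x ^ 2 ≠ 0) (hx : 1 - x ^ 2 ≠ 0) :
    (1 / 10 : K) * ((1 - 2 * x + x ^ 2)⁻¹ + 2 * (1 - t * x + x ^ 2)⁻¹
      + 2 * (1 + (1 + t) * x + x ^ 2)⁻¹ + 5 * (1 - x ^ 2)⁻¹)
      = 1 / ((1 - x ^ 2) * (1 - x ^ 5)) := by
  have hcyclo :
      (1 - t * x + x ^ 2) * (1 + (1 + t) * x + x ^ 2) = 1 + x + x ^ 2 + x ^ 3 + x ^ 4 := by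
    linear_combination (-x ^ 2) * ht
  have hpair : (1 - t * x + x ^ 2)⁻¹ + (1 + (1 + t) * x + x ^ 2)⁻¹
      = (2 + x + 2 * x ^ 2) / (1 + x + x ^ 2 + x ^ 3 + x ^ 4) := by
    rw [inv_add_inv h1 h2, hcyclo]
    ring
  have hx1 : 1 - x ≠ 0 := fun h => hx (by linear_combination (1 + x) * h)
  have hΦ : 1 + x + x ^ 2 + x ^ 3 + x ^ 4 ≠ 0 := hcyclo ▸ mul_ne_zero h1 h2
  have hx5 : 1 - x ^ 5 ≠ 0 := by
    rw [show 1 - x ^ 5 = (1 - x) * (1 + x + x ^ 2 + x ^ 3 + x ^ 4) by ring]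
    exact mul_ne_zero hx1 hΦ
  calc _ = (1 / 10 : K) * (((1 - x) ^ 2)⁻¹
          + 2 * ((2 + x + 2 * x ^ 2) / (1 + x + x ^ 2 + x ^ 3 + x ^ 4)) + 5 * (1 - x ^ 2)⁻¹) := by
        rw [← hpair]
        ring
    _ = _ := by
        field_simp
        ring

lemma sqrt_qval : Real.sqrt qval = 1 + Real.sqrt 5 := by
  have h5 : Real.sqrt 5 ^ 2 = 5 := Real.sq_sqrt (by norm_num)
  rw [Real.sqrt_eq_iff_eq_sq (by unfold qval; positivity) (by positivity), qval]
  linear_combination -h5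

lemma sq_sqrt_qval : Real.sqrt qval ^ 2 = qval := Real.sq_sqrt (by unfold qval; positivity)

lemma sigmaMat_mul_self : sigmaMat * sigmaMat = 1 := by
  have hs : Real.sqrt qval ≠ 0 := by rw [sqrt_qval]; positivity
  ext i j
  fin_cases i <;> fin_cases j <;>
    simp [sigmaMat, Matrix.mul_apply] <;> field_simp <;> linarith [sq_sqrt_qval]

lemma tauMat_mul_self : tauMat * tauMat = 1 := by
  ext i j
  fin_cases i <;> fin_cases j <;> simp [tauMat, Matrix.mul_apply]

lemma det_sigmaMat : sigmaMat.det = -1 := by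
  have hs : Real.sqrt qval ≠ 0 := by rw [sqrt_qval]; positivity
  simp [sigmaMat, Matrix.det_fin_two]
  field_simp
  linear_combination sq_sqrt_qval

lemma det_tauMat : tauMat.det = -1 := by
  simp [tauMat, Matrix.det_fin_two]

lemma trace_sigmaMat_mul_tauMat : (sigmaMat * tauMat).trace = (Real.sqrt 5 - 1) / 2 := by
  have h5 : Real.sqrt 5 ^ 2 = 5 := Real.sq_sqrt (by norm_num)
  simp [sigmaMat, tauMat, Matrix.trace_fin_two, sqrt_qval]
  field_simp
  linear_combination -h5

lemma molienDet_eq (lam : ℂ) (A : GL (Fin 2) ℝ) :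
    molienDet lam A = 1 - (A.val.trace : ℂ) * lam + (A.val.det : ℂ) * lam ^ 2 := by
  rw [molienDet, Matrix.det_one_sub_smul_fin_two]
  simp [Matrix.trace_fin_two, Matrix.det_fin_two]

lemma molienDet_of_mul_self_eq_one {A : GL (Fin 2) ℝ} (hA : A * A = 1) (hdet : A.val.det = -1)
    (lam : ℂ) : molienDet lam A = 1 - lam ^ 2 := by
  have hA' : A.val * A.val = 1 := by rw [← Units.val_mul, hA, Units.val_one]
  rw [molienDet_eq, A.val.trace_eq_zero_of_mul_self_eq_one hA' hdet, hdet]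
  push_cast
  ring

lemma molienDet_pow_of_det_eq_one {ρ : GL (Fin 2) ℝ} (hdet : ρ.val.det = 1) (lam : ℂ) (k : ℕ) :
    molienDet lam (ρ ^ k) = 1 - ((ρ.val ^ k).trace : ℂ) * lam + lam ^ 2 := by
  rw [molienDet_eq, Units.val_pow_eq_pow_val, Matrix.det_pow, hdet, one_pow]
  push_cast
  ring

lemma sum_inv_molienDet_pow {ρ : GL (Fin 2) ℝ} (hdet : ρ.val.det = 1)
    (htr : ρ.val.trace ^ 2 + ρ.val.trace = 1) (lam : ℂ) :
    ∑ i : ZMod 5, (molienDet lam (ρ ^ i.val))⁻¹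
      = (1 - 2 * lam + lam ^ 2)⁻¹ + 2 * (1 - (ρ.val.trace : ℂ) * lam + lam ^ 2)⁻¹
        + 2 * (1 + (1 + (ρ.val.trace : ℂ)) * lam + lam ^ 2)⁻¹ := by
  obtain ⟨t2, t3, t4⟩ := ρ.val.trace_pow_of_trace_sq_add_trace_eq_one hdet htr
  show ∑ i : Fin 5, (molienDet lam (ρ ^ (i : ℕ)))⁻¹ = _
  rw [Fin.sum_univ_eq_sum_range (fun k => (molienDet lam (ρ ^ k))⁻¹)]
  simp only [Finset.sum_range_succ, Finset.sum_range_zero, molienDet_pow_of_det_eq_one hdet,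
    pow_zero, pow_one, Matrix.trace_one, Fintype.card_fin, t2, t3, t4]
  push_cast
  ring

lemma orderOf_eq_five_of_trace_sq_add_trace_eq_one {R : Type*} [CommRing R] [CharZero R]
    {ρ : GL (Fin 2) R} (hdet : ρ.val.det = 1) (htr : ρ.val.trace ^ 2 + ρ.val.trace = 1) :
    orderOf ρ = 5 := by
  have : Fact (Nat.Prime 5) := ⟨Nat.prime_five⟩
  refine orderOf_eq_prime ?_ ?_
  · rw [Units.ext_iff, Units.val_pow_eq_pow_val, Units.val_one]
    exact ρ.val.pow_five_eq_one_of_trace_sq_add_trace_eq_one hdet htr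
  · rintro rfl
    rw [Units.val_one, Matrix.trace_one, Fintype.card_fin] at htr
    norm_num at htr

theorem molien_sum_of_reflections {σ τ : GL (Fin 2) ℝ} (hσσ : σ * σ = 1) (hττ : τ * τ = 1)
    (hdetσ : σ.val.det = -1) (hdetτ : τ.val.det = -1)
    (htr : (σ * τ).val.trace ^ 2 + (σ * τ).val.trace = 1) {lam : ℂ}
    (h : ∀ A ∈ Subgroup.closure {σ, τ}, molienDet lam A ≠ 0) (h2 : lam ^ 2 ≠ 1) :
    (1 / 10 : ℂ) * ∑ᶠ A ∈ Subgroup.closure {σ, τ}, (molienDet lam A)⁻¹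
      = 1 / ((1 - lam ^ 2) * (1 - lam ^ 5)) := by
  have hdet : (σ * τ).val.det = 1 := by
    rw [Units.val_mul, Matrix.det_mul, hdetσ, hdetτ]
    norm_num
  have hord := orderOf_eq_five_of_trace_sq_add_trace_eq_one hdet htr
  have h5 : (σ * τ) ^ 5 = 1 := hord ▸ pow_orderOf_eq_one _
  have hrefl (i : ZMod 5) :
      molienDet lam (DihedralGroup.lift σ τ hσσ hττ h5 (.sr i)) = 1 - lam ^ 2 := by
    refine molienDet_of_mul_self_eq_one ?_ ?_ lam
    · rw [← map_mul, DihedralGroup.sr_mul_self, map_one]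
    · rw [DihedralGroup.lift_sr, Units.val_mul, Units.val_pow_eq_pow_val, Matrix.det_mul,
        Matrix.det_pow, hdetσ, hdet, one_pow, mul_one]
  have hmem (k : ℕ) : (σ * τ) ^ k ∈ Subgroup.closure {σ, τ} :=
    pow_mem (mul_mem (Subgroup.subset_closure (by simp)) (Subgroup.subset_closure (by simp))) k
  have hD1 := h _ (hmem 1)
  rw [molienDet_pow_of_det_eq_one hdet, pow_one] at hD1
  have hD2 : 1 + (1 + ((σ * τ).val.trace : ℂ)) * lam + lam ^ 2 ≠ 0 := by
    convert h _ (hmem 2) using 1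
    rw [molienDet_pow_of_det_eq_one hdet,
      ((σ * τ).val.trace_pow_of_trace_sq_add_trace_eq_one hdet htr).1]
    push_cast
    ring
  rw [← DihedralGroup.range_lift hσσ hττ h5,
    MonoidHom.finsum_mem_range _ (DihedralGroup.lift_injective hσσ hττ h5 hord (by norm_num)),
    DihedralGroup.sum_univ]
  simp only [DihedralGroup.lift_r, hrefl, Finset.sum_const, Finset.card_univ, ZMod.card,
    nsmul_eq_mul]
  rw [sum_inv_molienDet_pow hdet htr]
  exact molien_sum_eq_of_sq_add_self_eq_one (by exact_mod_cast htr) hD1 hD2 (sub_ne_zero.2 h2.symm)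

theorem molien_series (σ τ : GL (Fin 2) ℝ)
    (hσ : (σ : Matrix (Fin 2) (Fin 2) ℝ) = sigmaMat)
    (hτ : (τ : Matrix (Fin 2) (Fin 2) ℝ) = tauMat) :
    ∀ lam : ℂ,
      (∀ A ∈ Subgroup.closure ({σ, τ} : Set (GL (Fin 2) ℝ)), molienDet lam A ≠ 0) →
      lam ^ 2 ≠ 1 → lam ^ 5 ≠ 1 →
      (1 / 10 : ℂ) * (∑ᶠ A ∈ (Subgroup.closure ({σ, τ} : Set (GL (Fin 2) ℝ)) :
          Subgroup (GL (Fin 2) ℝ)), (molienDet lam A)⁻¹)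
        = 1 / ((1 - lam ^ 2) * (1 - lam ^ 5)) := by
  intro lam h h2 _
  refine molien_sum_of_reflections ?_ ?_ (by rw [hσ, det_sigmaMat]) (by rw [hτ, det_tauMat]) ?_ h h2
  · exact Units.ext (by rw [Units.val_mul, hσ, sigmaMat_mul_self, Units.val_one])
  · exact Units.ext (by rw [Units.val_mul, hτ, tauMat_mul_self, Units.val_one])
  · rw [Units.val_mul, hσ, hτ, trace_sigmaMat_mul_tauMat]
    linear_combination Real.sq_sqrt (by norm_num : (0 : ℝ) ≤ 5) / 4
end
end
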